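/- The set of achievable average power–delay pairs under policies equals the set of power–delay pairs of LP points: { (P̄(f,π), D(f,π)) : f a policy and π a stationary distribution of f } = { (P̄(x), D(x)) : x an LP point }, as subsets of ℝ². In particular, for every real Pth, the infimum of D(f,π) over all policies f with stationary distribution π satisfying P̄(f,π) ≤ Pth equals the infimum of D(x) over all LP points x satisfying P̄(x) ≤ Pth. -/

import Mathlib

open Finset

/-- Minimal number of packets that may be served at queue length `q`:
`s_q^min = max{0, q − (Q − A)}` (natural subtraction realizes the `max` with `0`). -/
def sLo (Q A q : ℕ) : ℕ := q - (Q - A)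

/-- Maximal number of packets that may be served at queue length `q`: `s_q^max = min{S, q}`. -/
def sHi (S q : ℕ) : ℕ := min S q

/-- Indicator `1{i − s + A = j}` (integer arithmetic), as a real number. -/
noncomputable def indArr (A i s j : ℕ) : ℝ :=
  if (i : ℤ) - (s : ℤ) + (A : ℤ) = (j : ℤ) then 1 else 0

/-- Indicator `1{i − s = j}` (integer arithmetic), as a real number. -/
noncomputable def indNoArr (i s j : ℕ) : ℝ :=
  if (i : ℤ) - (s : ℤ) = (j : ℤ) then 1 else 0

/-- Transition probability `λ_{i,j}` of the queue under policy `f`. -/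
noncomputable def lam (S A : ℕ) (α : ℝ) (f : ℕ → ℕ → ℝ) (i j : ℕ) : ℝ :=
  ∑ s ∈ range (S + 1), f i s * (α * indArr A i s j + (1 - α) * indNoArr i s j)

/-- A (probabilistic, queue-aware) variable-length coding policy. -/
def IsPolicy (Q S A : ℕ) (f : ℕ → ℕ → ℝ) : Prop :=
  (∀ q ≤ Q, ∀ s ≤ S, 0 ≤ f q s) ∧
  (∀ q ≤ Q, ∑ s ∈ range (S + 1), f q s = 1) ∧
  (∀ q ≤ Q, ∀ s ≤ S, (s < sLo Q A q ∨ sHi S q < s) → f q s = 0)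

/-- `pi` is a stationary distribution of the queue-length Markov chain of policy `f`. -/
def IsStationaryDist (Q S A : ℕ) (α : ℝ) (f : ℕ → ℕ → ℝ) (pi : ℕ → ℝ) : Prop :=
  (∀ q ≤ Q, 0 ≤ pi q) ∧
  (∑ q ∈ range (Q + 1), pi q = 1) ∧
  (∀ j ≤ Q, pi j = ∑ i ∈ range (Q + 1), lam S A α f i j * pi i)

/-- Average delay `D(f,π) = (1/(A·α))·Σ_q q·π_q` of a policy with stationary distribution `pi`. -/
noncomputable def delayFP (Q A : ℕ) (α : ℝ) (pi : ℕ → ℝ) : ℝ :=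
  (1 / (A * α)) * ∑ q ∈ range (Q + 1), (q : ℝ) * pi q

/-- Average power `P̄(f,π) = Σ_q Σ_s P(s)·f_{q,s}·π_q`. -/
noncomputable def powerFP (Q S : ℕ) (P : ℕ → ℝ) (f : ℕ → ℕ → ℝ) (pi : ℕ → ℝ) : ℝ :=
  ∑ q ∈ range (Q + 1), ∑ s ∈ range (S + 1), P s * f q s * pi q

/-- An LP point: a feasible point of the equivalent linear program. -/
def IsLP (Q S A : ℕ) (α : ℝ) (x : ℕ → ℕ → ℝ) : Prop :=
  (∀ q ≤ Q, ∀ s ≤ S, 0 ≤ x q s) ∧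
  (∀ q ≤ Q, ∀ s ≤ S, (s < sLo Q A q ∨ sHi S q < s) → x q s = 0) ∧
  (∑ q ∈ range (Q + 1), ∑ s ∈ range (S + 1), x q s = 1) ∧
  (∀ j ≤ Q,
    ∑ i ∈ range (Q + 1), ∑ s ∈ range (S + 1),
      x i s * (α * indArr A i s j + (1 - α) * indNoArr i s j)
    = ∑ s ∈ range (S + 1), x j s)

/-- Delay `D(x) = (1/(A·α))·Σ_{q,s} q·x_{q,s}` of an LP point. -/
noncomputable def delayLP (Q S A : ℕ) (α : ℝ) (x : ℕ → ℕ → ℝ) : ℝ :=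
  (1 / (A * α)) * ∑ q ∈ range (Q + 1), ∑ s ∈ range (S + 1), (q : ℝ) * x q s

/-- Power `P̄(x) = Σ_{q,s} P(s)·x_{q,s}` of an LP point. -/
noncomputable def powerLP (Q S : ℕ) (P : ℕ → ℝ) (x : ℕ → ℕ → ℝ) : ℝ :=
  ∑ q ∈ range (Q + 1), ∑ s ∈ range (S + 1), P s * x q s

/-! The LP variable `x q s` is the stationary joint probability of queue length `q` and of `s`
packets being served, i.e. `x q s = f q s * π q`. Conversely every LP point disintegrates as
`x = f · π`, with `π` its `q`-marginal and `f` the conditional law of `s` given `q` (any admissible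
law where `π q = 0`). Along this correspondence the power, the delay and the balance equations of
the Markov chain become the linear expressions of the LP. -/

section

variable {Q S A : ℕ} {α : ℝ} {x f : ℕ → ℕ → ℝ} {pi : ℕ → ℝ}

lemma sLo_le_sHi {q : ℕ} (hAS : A ≤ S) (hSQ : S ≤ Q) (hq : q ≤ Q) : sLo Q A q ≤ sHi S q := by
  unfold sLo sHi; omega

def IsJointLaw (Q S : ℕ) (x f : ℕ → ℕ → ℝ) (pi : ℕ → ℝ) : Prop :=
  (∀ q ≤ Q, ∀ s ≤ S, x q s = f q s * pi q) ∧ ∀ q ≤ Q, ∑ s ∈ range (S + 1), x q s = pi q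

namespace IsJointLaw

lemma powerLP_eq (h : IsJointLaw Q S x f pi) (P : ℕ → ℝ) :
    powerLP Q S P x = powerFP Q S P f pi := by
  refine sum_congr rfl fun q hq => sum_congr rfl fun s hs => ?_
  rw [h.1 q (mem_range_succ_iff.1 hq) s (mem_range_succ_iff.1 hs), mul_assoc]

lemma delayLP_eq (h : IsJointLaw Q S x f pi) : delayLP Q S A α x = delayFP Q A α pi := by
  unfold delayLP delayFP
  congr 1
  refine sum_congr rfl fun q hq => ?_
  rw [← mul_sum, h.2 q (mem_range_succ_iff.1 hq)]

lemma sum_mul_transition_eq (h : IsJointLaw Q S x f pi) (j : ℕ) :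
    ∑ i ∈ range (Q + 1), ∑ s ∈ range (S + 1),
        x i s * (α * indArr A i s j + (1 - α) * indNoArr i s j)
      = ∑ i ∈ range (Q + 1), lam S A α f i j * pi i := by
  refine sum_congr rfl fun i hi => ?_
  rw [lam, sum_mul]
  refine sum_congr rfl fun s hs => ?_
  rw [h.1 i (mem_range_succ_iff.1 hi) s (mem_range_succ_iff.1 hs)]
  ring

lemma isLP_iff (h : IsJointLaw Q S x f pi) (hf : IsPolicy Q S A f) :
    IsLP Q S A α x ↔ IsStationaryDist Q S A α f pi := by
  have hmass : ∑ q ∈ range (Q + 1), ∑ s ∈ range (S + 1), x q s = ∑ q ∈ range (Q + 1), pi q :=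
    sum_congr rfl fun q hq => h.2 q (mem_range_succ_iff.1 hq)
  constructor
  · rintro ⟨hx0, -, hx1, hbal⟩
    refine ⟨fun q hq => ?_, hmass ▸ hx1, fun j hj => ?_⟩
    · rw [← h.2 q hq]
      exact sum_nonneg fun s hs => hx0 q hq s (mem_range_succ_iff.1 hs)
    · rw [← h.2 j hj, ← hbal j hj, h.sum_mul_transition_eq]
  · rintro ⟨hpi0, hpi1, hbal⟩
    refine ⟨fun q hq s hs => ?_, fun q hq s hs hout => ?_, hmass ▸ hpi1, fun j hj => ?_⟩
    · rw [h.1 q hq s hs]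
      exact mul_nonneg (hf.1 q hq s hs) (hpi0 q hq)
    · rw [h.1 q hq s hs, hf.2.2 q hq s hs hout, zero_mul]
    · rw [h.2 j hj, hbal j hj, h.sum_mul_transition_eq]

end IsJointLaw

lemma isJointLaw_mul (hf : IsPolicy Q S A f) : IsJointLaw Q S (fun q s => f q s * pi q) f pi :=
  ⟨fun _ _ _ _ => rfl, fun q hq => by rw [← sum_mul, hf.2.1 q hq, one_mul]⟩

noncomputable def marginal (S : ℕ) (x : ℕ → ℕ → ℝ) (q : ℕ) : ℝ :=
  ∑ s ∈ range (S + 1), x q s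

noncomputable def condPolicy (Q S A : ℕ) (x : ℕ → ℕ → ℝ) (q s : ℕ) : ℝ :=
  if marginal S x q = 0 then (if s = sLo Q A q then 1 else 0) else x q s / marginal S x q

lemma isJointLaw_condPolicy (hx : ∀ q ≤ Q, ∀ s ≤ S, 0 ≤ x q s) :
    IsJointLaw Q S x (condPolicy Q S A x) (marginal S x) := by
  refine ⟨fun q hq s hs => ?_, fun _ _ => rfl⟩
  by_cases h0 : marginal S x q = 0
  · rw [h0, mul_zero]
    exact (sum_eq_zero_iff_of_nonneg fun s hs => hx q hq s (mem_range_succ_iff.1 hs)).1 h0 s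
      (mem_range_succ_iff.2 hs)
  · rw [condPolicy, if_neg h0, div_mul_cancel₀ _ h0]

lemma isPolicy_condPolicy (hAS : A ≤ S) (hSQ : S ≤ Q) (hx : IsLP Q S A α x) :
    IsPolicy Q S A (condPolicy Q S A x) := by
  obtain ⟨hx0, hxout, -, -⟩ := hx
  have hband := fun q (hq : q ≤ Q) => sLo_le_sHi hAS hSQ hq
  refine ⟨fun q hq s hs => ?_, fun q hq => ?_, fun q hq s hs hout => ?_⟩ <;>
    by_cases h0 : marginal S x q = 0 <;> simp only [condPolicy, h0, if_true, if_false]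
  · split_ifs <;> norm_num
  · exact div_nonneg (hx0 q hq s hs) (sum_nonneg fun s hs => hx0 q hq s (mem_range_succ_iff.1 hs))
  · rw [sum_ite_eq' (range (S + 1)) (sLo Q A q), if_pos]
    exact mem_range_succ_iff.2 ((hband q hq).trans (min_le_left S q))
  · rw [← sum_div]; exact div_self h0
  · rw [if_neg]
    have := hband q hq
    omega
  · rw [hxout q hq s hs hout, zero_div]

lemma exists_policy_iff_exists_LP (hAS : A ≤ S) (hSQ : S ≤ Q) (P : ℕ → ℝ) (p d : ℝ) :
    (∃ f pi, IsPolicy Q S A f ∧ IsStationaryDist Q S A α f pi ∧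
        powerFP Q S P f pi = p ∧ delayFP Q A α pi = d) ↔
      ∃ x, IsLP Q S A α x ∧ powerLP Q S P x = p ∧ delayLP Q S A α x = d := by
  constructor
  · rintro ⟨f, pi, hf, hpi, rfl, rfl⟩
    have h := isJointLaw_mul (pi := pi) hf
    exact ⟨_, (h.isLP_iff hf).2 hpi, h.powerLP_eq P, h.delayLP_eq⟩
  · rintro ⟨x, hx, rfl, rfl⟩
    have h := isJointLaw_condPolicy (A := A) hx.1
    have hf := isPolicy_condPolicy hAS hSQ hx
    exact ⟨_, _, hf, (h.isLP_iff hf).1 hx, (h.powerLP_eq P).symm, h.delayLP_eq.symm⟩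

end

theorem achievable_region_eq_LP_region_general
    (Q S A : ℕ) (α : ℝ) (P : ℕ → ℝ)
    (hAS : A ≤ S) (hSQ : S ≤ Q) :
    ({p : ℝ × ℝ | ∃ f pi, IsPolicy Q S A f ∧ IsStationaryDist Q S A α f pi ∧
        p = (powerFP Q S P f pi, delayFP Q A α pi)}
      = {p : ℝ × ℝ | ∃ x, IsLP Q S A α x ∧
        p = (powerLP Q S P x, delayLP Q S A α x)}) ∧
    (∀ Pth : ℝ,
      sInf {d : ℝ | ∃ f pi, IsPolicy Q S A f ∧ IsStationaryDist Q S A α f pi ∧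
          powerFP Q S P f pi ≤ Pth ∧ d = delayFP Q A α pi}
        = sInf {d : ℝ | ∃ x, IsLP Q S A α x ∧
          powerLP Q S P x ≤ Pth ∧ d = delayLP Q S A α x}) := by
  have key := exists_policy_iff_exists_LP (α := α) hAS hSQ P
  refine ⟨Set.ext fun ⟨p, d⟩ => ?_, fun Pth => congrArg sInf (Set.ext fun d => ?_)⟩
  · simpa only [Set.mem_ofPred_eq, Prod.mk.injEq, eq_comm, exists_and_left] using key p d
  · constructor
    · rintro ⟨f, pi, hf, hpi, hle, rfl⟩
      obtain ⟨x, hx, hp, hd⟩ := (key _ _).1 ⟨f, pi, hf, hpi, rfl, rfl⟩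
      exact ⟨x, hx, hp ▸ hle, hd.symm⟩
    · rintro ⟨x, hx, hle, rfl⟩
      obtain ⟨f, pi, hf, hpi, hp, hd⟩ := (key _ _).2 ⟨x, hx, rfl, rfl⟩
      exact ⟨f, pi, hf, hpi, hp ▸ hle, hd.symm⟩

/-- The achievable average power–delay pairs under policies coincide
with the power–delay pairs of LP points, and for every power budget `Pth` the two
constrained delay infima agree. -/
theorem achievable_region_eq_LP_region
    (Q S A : ℕ) (α : ℝ) (P : ℕ → ℝ)
    (hA : 1 ≤ A) (hAS : A ≤ S) (hSQ : S ≤ Q)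
    (hα0 : 0 < α) (hα1 : α < 1)
    (hP : ∀ s ≤ S, 0 ≤ P s) :
    ({p : ℝ × ℝ | ∃ f pi, IsPolicy Q S A f ∧ IsStationaryDist Q S A α f pi ∧
        p = (powerFP Q S P f pi, delayFP Q A α pi)}
      = {p : ℝ × ℝ | ∃ x, IsLP Q S A α x ∧
        p = (powerLP Q S P x, delayLP Q S A α x)}) ∧
    (∀ Pth : ℝ,
      sInf {d : ℝ | ∃ f pi, IsPolicy Q S A f ∧ IsStationaryDist Q S A α f pi ∧
          powerFP Q S P f pi ≤ Pth ∧ d = delayFP Q A α pi}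
        = sInf {d : ℝ | ∃ x, IsLP Q S A α x ∧
          powerLP Q S P x ≤ Pth ∧ d = delayLP Q S A α x}) :=
  achievable_region_eq_LP_region_general Q S A α P hAS hSQ
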